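/- The anticommutator partial product on M_2(ℂ) is not completely contractive: there exist positive integers n, k, l and matrices A ∈ M_{n,k}(M_2(ℂ)), B ∈ M_{k,l}(M_2(ℂ)) such that ‖A ⊙_m B‖ > ‖A‖ · ‖B‖, where (A ⊙_m B)_{ij} = Σ_r ½(A_{ir}B_{rj} + B_{rj}A_{ir}), and the norms are the operator norms obtained by viewing a p×q block matrix with M_2(ℂ) entries as a linear operator from (ℂ²)^q to (ℂ²)^p. -/
import Mathlib


noncomputable section

open scoped BigOperators

/-- The operator norm of a complex scalar matrix indexed by arbitrary finite types,
viewed as a linear map between the corresponding finite-dimensional Hilbert spaces. -/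
noncomputable def cOpNorm' {ι κ : Type} [Fintype ι] [Fintype κ] [DecidableEq ι] [DecidableEq κ]
    (α : Matrix ι κ ℂ) : ℝ :=
  ‖LinearMap.toContinuousLinearMap (Matrix.toEuclideanLin α)‖

/-- The norm of an `n × k` block matrix with `M₂(ℂ)` entries, obtained by viewing it as a
linear operator `(ℂ²)^k → (ℂ²)^n`, i.e. by flattening it to an `(n·2) × (k·2)` scalar matrix. -/
noncomputable def blockNorm {n k : ℕ} (A : Matrix (Fin n) (Fin k) (Matrix (Fin 2) (Fin 2) ℂ)) :
    ℝ :=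
  cOpNorm' (Matrix.of fun (p : Fin n × Fin 2) (q : Fin k × Fin 2) => A p.1 q.1 p.2 q.2)

/-- The matrix product of block matrices with respect to the anticommutator partial product
`m(x, y) = ½(xy + yx)` on `M₂(ℂ)`: `(A ⊙_m B)_{i j} = Σ_r ½(A_{i r} B_{r j} + B_{r j} A_{i r})`. -/
noncomputable def anticommOdot {n k l : ℕ}
    (A : Matrix (Fin n) (Fin k) (Matrix (Fin 2) (Fin 2) ℂ))
    (B : Matrix (Fin k) (Fin l) (Matrix (Fin 2) (Fin 2) ℂ)) :
    Matrix (Fin n) (Fin l) (Matrix (Fin 2) (Fin 2) ℂ) :=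
  Matrix.of fun i j => ∑ r, ((2 : ℂ)⁻¹) • (A i r * B r j + B r j * A i r)

open Matrix
open scoped Matrix.Norms.L2Operator

def ACE : Matrix (Fin 1) (Fin 2) (Matrix (Fin 2) (Fin 2) ℂ) := !![!![1,0;0,0], !![0,0;1,0]]
def BCE : Matrix (Fin 2) (Fin 1) (Matrix (Fin 2) (Fin 2) ℂ) := !![!![1,0;0,0]; !![0,1;0,0]]

lemma cOpNorm'_eq {ι κ : Type} [Fintype ι] [Fintype κ] [DecidableEq ι] [DecidableEq κ]
    (α : Matrix ι κ ℂ) : cOpNorm' α = ‖α‖ := rfl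

def Af : Matrix (Fin 1 × Fin 2) (Fin 2 × Fin 2) ℂ :=
  Matrix.of fun p q => ACE p.1 q.1 p.2 q.2
def Bf : Matrix (Fin 2 × Fin 2) (Fin 1 × Fin 2) ℂ :=
  Matrix.of fun p q => BCE p.1 q.1 p.2 q.2

lemma hAf : Af * Afᴴ = 1 := by
  ext ⟨i, a⟩ ⟨j, b⟩
  fin_cases i <;> fin_cases j <;> fin_cases a <;> fin_cases b <;>
    simp [Af, ACE, Matrix.mul_apply, Fintype.sum_prod_type, Fin.sum_univ_two,
      Matrix.conjTranspose_apply, Matrix.one_apply, Prod.ext_iff]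

lemma hBf : Bfᴴ * Bf = 1 := by
  ext ⟨i, a⟩ ⟨j, b⟩
  fin_cases i <;> fin_cases j <;> fin_cases a <;> fin_cases b <;>
    simp [Bf, BCE, Matrix.mul_apply, Fintype.sum_prod_type, Fin.sum_univ_two,
      Matrix.conjTranspose_apply, Matrix.one_apply, Prod.ext_iff]

lemma hone {ι : Type} [Fintype ι] [DecidableEq ι] [Nonempty ι] :
    ‖(1 : Matrix ι ι ℂ)‖ = 1 := by
  rw [Matrix.cstar_norm_def, _root_.map_one]
  exact ContinuousLinearMap.norm_id

lemma normAf : ‖Af‖ = 1 := by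
  have h := Matrix.l2_opNorm_conjTranspose_mul_self Afᴴ
  rw [Matrix.conjTranspose_conjTranspose, hAf, Matrix.l2_opNorm_conjTranspose, hone] at h
  nlinarith [norm_nonneg Af]

lemma normBf : ‖Bf‖ = 1 := by
  have h := Matrix.l2_opNorm_conjTranspose_mul_self Bf
  rw [hBf, hone] at h
  nlinarith [norm_nonneg Bf]

lemma hC : anticommOdot ACE BCE = !![!![(3:ℂ)/2, 0; 0, 1/2]] := by
  ext i j a b
  fin_cases i <;> fin_cases j <;> fin_cases a <;> fin_cases b <;>
    simp [anticommOdot, ACE, BCE, Fin.sum_univ_two, Matrix.mul_apply] <;> norm_num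

/-- The anticommutator partial product on `M₂(ℂ)` is not completely contractive: there are
matrices `A ∈ M_{n,k}(M₂(ℂ))` and `B ∈ M_{k,l}(M₂(ℂ))` with `‖A ⊙_m B‖ > ‖A‖ ‖B‖`. -/
theorem anticommutator_not_completely_contractive :
    ∃ (n k l : ℕ) (A : Matrix (Fin n) (Fin k) (Matrix (Fin 2) (Fin 2) ℂ))
      (B : Matrix (Fin k) (Fin l) (Matrix (Fin 2) (Fin 2) ℂ)),
      blockNorm A * blockNorm B < blockNorm (anticommOdot A B) := by
  refine ⟨1, 2, 1, ACE, BCE, ?_⟩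
  have hA : blockNorm ACE = 1 := by rw [blockNorm, cOpNorm'_eq]; exact normAf
  have hB : blockNorm BCE = 1 := by rw [blockNorm, cOpNorm'_eq]; exact normBf
  rw [hA, hB, one_mul]
  set Cf : Matrix (Fin 1 × Fin 2) (Fin 1 × Fin 2) ℂ :=
    Matrix.of fun p q => (anticommOdot ACE BCE) p.1 q.1 p.2 q.2 with hCf
  have hbn : blockNorm (anticommOdot ACE BCE) = ‖Cf‖ := rfl
  rw [hbn]
  have hCf2 : Cf = Matrix.of fun p q =>
      (!![!![(3:ℂ)/2, 0; 0, 1/2]] : Matrix (Fin 1) (Fin 1) (Matrix (Fin 2) (Fin 2) ℂ))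
        p.1 q.1 p.2 q.2 := by rw [hCf, hC]
  have key : (3/2 : ℝ) ≤ ‖Cf‖ := by
    have hx := Matrix.l2_opNorm_mulVec Cf (EuclideanSpace.single (⟨0,0⟩ : Fin 1 × Fin 2) (1:ℂ))
    have hval : (EuclideanSpace.equiv (Fin 1 × Fin 2) ℂ).symm
        (Cf *ᵥ (EuclideanSpace.single (⟨0,0⟩ : Fin 1 × Fin 2) (1:ℂ)))
        = EuclideanSpace.single (⟨0,0⟩ : Fin 1 × Fin 2) ((3:ℂ)/2) := by
      ext ⟨i, a⟩
      fin_cases i <;> fin_cases a <;>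
        simp [hCf2, Matrix.mulVec, dotProduct, Fintype.sum_prod_type, Fin.sum_univ_two,
          EuclideanSpace.single_apply, Prod.ext_iff] <;> norm_num
    rw [hval, EuclideanSpace.norm_single, EuclideanSpace.norm_single] at hx
    have : ‖((3:ℂ)/2)‖ = 3/2 := by simp [_root_.norm_div]
    rw [this] at hx
    simpa using hx
  linarith
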